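/- For every n ≥ 1 the graph T_n is a co-TT graph, where T_n consists of a path v, x_0, x_1, ..., x_n, w, a vertex x adjacent to all of x_0, ..., x_n, and a pendant vertex u adjacent only to x. -/

import Mathlib

/-- `G` is a co-TT (signed-interval) graph. -/
def IsCoTT {V : Type*} (G : SimpleGraph V) : Prop :=
  ∃ l r : V → ℝ, ∀ u v : V, u ≠ v → (G.Adj u v ↔ l u ≤ r v ∧ l v ≤ r u)

/-- Base adjacency of `T_n`.  Vertices: `.inl i` is `x_i` (for `0 ≤ i ≤ n`);
`.inr 0 = v`, `.inr 1 = w`, `.inr 2 = u`, `.inr 3 = x`.  Edges: path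
`v, x_0, x_1, …, x_n, w`, `x` adjacent to every `x_i`, and `x u`. -/
def tnRel (n : ℕ) (a b : Fin (n + 1) ⊕ Fin 4) : Prop :=
  (∃ i j : Fin (n + 1), a = .inl i ∧ b = .inl j ∧ (j : ℕ) = (i : ℕ) + 1) ∨
  (∃ i : Fin (n + 1), a = .inr 0 ∧ b = .inl i ∧ (i : ℕ) = 0) ∨
  (∃ i : Fin (n + 1), a = .inl i ∧ (i : ℕ) = n ∧ b = .inr 1) ∨
  (∃ i : Fin (n + 1), a = .inr 3 ∧ b = .inl i) ∨
  (a = .inr 3 ∧ b = .inr 2)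

/-- The graph `T_n`. -/
def TnGraph (n : ℕ) : SimpleGraph (Fin (n + 1) ⊕ Fin 4) :=
  SimpleGraph.fromRel (tnRel n)

/-! A positive interval `[a, b]` and a negative one `(l, r)`, `r < l`, are adjacent iff
`[r, l] ⊆ [a, b]`, and two negative intervals are never adjacent. Represent `x_i` by
`[4i, 4i + 4]` (consecutive ones touch) and `x` by `[1, 4n + 1]`, which meets all of them; give
`v`, `w`, `u` the negative intervals spanning `[0, 4]`, `[4n, 4n + 2]`, `[1, 4n + 1]`. The only
positive intervals containing these are `x_0`, `x_n` and `x` respectively, the last because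
`n ≥ 1`. All endpoints are natural numbers, so every check is linear arithmetic over `ℕ`. -/

theorem IsCoTT.of_strictMono {V α : Type*} [LinearOrder α] {G : SimpleGraph V} {f : α → ℝ}
    (hf : StrictMono f) (l r : V → α)
    (h : ∀ u v, u ≠ v → (G.Adj u v ↔ l u ≤ r v ∧ l v ≤ r u)) : IsCoTT G :=
  ⟨f ∘ l, f ∘ r, fun u v huv => by simpa only [Function.comp, hf.le_iff_le] using h u v huv⟩

namespace TnGraph

variable {n : ℕ}

theorem adj_inl_inl {i j : Fin (n + 1)} :
    (TnGraph n).Adj (.inl i) (.inl j) ↔ (j : ℕ) = i + 1 ∨ (i : ℕ) = j + 1 := by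
  simp [TnGraph, tnRel]
  rintro (h | h) rfl <;> omega

theorem adj_inl_inr {i : Fin (n + 1)} {k : Fin 4} :
    (TnGraph n).Adj (.inl i) (.inr k) ↔ k = 0 ∧ (i : ℕ) = 0 ∨ k = 1 ∧ (i : ℕ) = n ∨ k = 3 := by
  simp [TnGraph, tnRel]
  tauto

theorem adj_inr_inr {k k' : Fin 4} :
    (TnGraph n).Adj (.inr k) (.inr k') ↔ k = 3 ∧ k' = 2 ∨ k = 2 ∧ k' = 3 := by
  simp [TnGraph, tnRel]
  omega

def left (n : ℕ) : Fin (n + 1) ⊕ Fin 4 → ℕ :=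
  Sum.elim (fun i => 4 * i) ![4, 4 * n + 2, 4 * n + 1, 1]

def right (n : ℕ) : Fin (n + 1) ⊕ Fin 4 → ℕ :=
  Sum.elim (fun i => 4 * i + 4) ![0, 4 * n, 1, 4 * n + 1]

theorem adj_iff_left_le_right (hn : 1 ≤ n) {a b : Fin (n + 1) ⊕ Fin 4} (hab : a ≠ b) :
    (TnGraph n).Adj a b ↔ left n a ≤ right n b ∧ left n b ≤ right n a := by
  rcases a with i | k <;> rcases b with j | k'
  · have hij : (i : ℕ) ≠ j := Fin.val_injective.ne (by simpa using hab)
    rw [adj_inl_inl]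
    simp only [left, right, Sum.elim_inl]
    omega
  · have hi := i.is_le
    rw [adj_inl_inr]
    fin_cases k' <;> simp [left, right] <;> omega
  · have hj := j.is_le
    rw [SimpleGraph.adj_comm, adj_inl_inr]
    fin_cases k <;> simp [left, right] <;> omega
  · rw [adj_inr_inr]
    fin_cases k <;> fin_cases k' <;> simp_all [left, right]

end TnGraph

/-- For every `n ≥ 1`, `T_n` is a co-TT graph. -/
theorem TnGraph_isCoTT : ∀ n : ℕ, 1 ≤ n → IsCoTT (TnGraph n) := fun n hn =>
  IsCoTT.of_strictMono Nat.strictMono_cast (TnGraph.left n) (TnGraph.right n)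
    fun _ _ => TnGraph.adj_iff_left_le_right hn
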